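/- arXiv:2207.05982 — 2 statements merged into one kernel-verified Lean document; each statement's English description precedes it below -/
import Mathlib

section
/- Let E be a topological space and J a concentration on E. Let I : E → [0,∞]. Then the lower large-deviation bound -inf_{x∈O} I(x) ≤ J(O) holds for every open set O ⊆ E if and only if the lower Laplace bound φ_J(f) ≥ sup_{x∈E}(f(x) - I(x)) holds for every lower semicontinuous function f : E → ℝ ∪ {-∞}. -/
/-! The Laplace bound at `f` and a point `x` follows from the large-deviation bound on the
open superlevel sets `{f > c}`, `c < f x`, which contain `x`. Conversely, the large-deviation
bound on an open set `O` is the Laplace bound for the lower semicontinuous function that is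
`0` on `O` and `-∞` off `O`, whose convex integral is at most `J O`. -/

open Set

/-- The convex integral of `f` with respect to a concentration `J`. -/
noncomputable def convexIntegral {E : Type*} (J : Set E → EReal) (f : E → EReal) : EReal :=
  ⨆ c : ℝ, ((c : EReal) + J {x | (c : EReal) < f x})

namespace EReal

theorem add_le_of_forall_coe_lt_add_le {a b z : EReal}
    (h : ∀ c : ℝ, (c : EReal) < a → (c : EReal) + b ≤ z) : a + b ≤ z := by
  refine add_le_of_forall_lt fun a' ha' b' hb' => ?_
  induction a' using EReal.rec with
  | bot => simp
  | coe c => exact (add_le_add_right hb'.le _).trans (h c ha')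
  | top => exact absurd ha' not_top_lt

end EReal

section ConvexIntegral

variable {E : Type*} {J : Set E → EReal}

theorem le_convexIntegral (f : E → EReal) (c : ℝ) :
    (c : EReal) + J {x | (c : EReal) < f x} ≤ convexIntegral J f :=
  le_iSup (fun c : ℝ => (c : EReal) + J {x | (c : EReal) < f x}) c

theorem add_le_convexIntegral_of_forall_lt {f : E → EReal} {x : E} {y : EReal}
    (h : ∀ c : ℝ, (c : EReal) < f x → y ≤ J {z | (c : EReal) < f z}) :
    f x + y ≤ convexIntegral J f :=
  EReal.add_le_of_forall_coe_lt_add_le fun c hc =>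
    (add_le_add_right (h c hc) _).trans (le_convexIntegral f c)

theorem convexIntegral_indicator_compl_bot_le (hJ : J ∅ = ⊥) (O : Set E) :
    convexIntegral J (Oᶜ.indicator fun _ => ⊥) ≤ J O := by
  refine iSup_le fun c => ?_
  rcases lt_or_ge c 0 with hc | hc
  · have hlevel : {x | (c : EReal) < Oᶜ.indicator (fun _ => ⊥) x} = O := by
      ext x
      by_cases hx : x ∈ O <;> simp [hx, hc]
    rw [hlevel]
    exact add_le_of_nonpos_left (EReal.coe_nonpos.mpr hc.le)
  · have hlevel : {x | (c : EReal) < Oᶜ.indicator (fun _ => ⊥) x} = ∅ := by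
      ext x
      by_cases hx : x ∈ O <;> simp [hx, hc]
    rw [hlevel, hJ, EReal.add_bot]
    exact bot_le

end ConvexIntegral

theorem stmt_9_general {E : Type*} [TopologicalSpace E]
    (J : Set E → EReal)
    (hJempty : J ∅ = ⊥)
    (I : E → EReal) :
    (∀ O : Set E, IsOpen O → -(⨅ x ∈ O, I x) ≤ J O) ↔
      (∀ f : E → EReal, LowerSemicontinuous f → (∀ x, f x ≠ ⊤) →
        (⨆ x : E, f x - I x) ≤ convexIntegral J f) := by
  constructor
  · intro hLD f hf _
    refine iSup_le fun x => ?_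
    rw [sub_eq_add_neg]
    exact add_le_convexIntegral_of_forall_lt fun c hc =>
      (EReal.neg_le_neg_iff.mpr (iInf₂_le x hc)).trans (hLD _ (hf.isOpen_preimage c))
  · intro hLaplace O hO
    set f : E → EReal := Oᶜ.indicator fun _ => ⊥
    have hf_on : ∀ x ∈ O, f x = 0 := fun x hx => indicator_of_notMem (notMem_compl_iff.mpr hx) _
    calc -(⨅ x ∈ O, I x) ≤ ⨆ x, f x - I x := by
          refine EReal.neg_le.mpr (le_iInf₂ fun x hx => EReal.neg_le.mp ?_)
          simpa [hf_on x hx] using le_iSup (fun x => f x - I x) x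
      _ ≤ convexIntegral J f :=
          hLaplace f (hO.isClosed_compl.lowerSemicontinuous_indicator bot_le)
            fun x => by by_cases hx : x ∈ O <;> simp [f, hx]
      _ ≤ J O := convexIntegral_indicator_compl_bot_le hJempty O

/-- Duality for the lower bounds: the lower large-deviation bound over open sets holds
iff the lower Laplace bound over lower semicontinuous functions holds. -/
theorem stmt_9 {E : Type*} [TopologicalSpace E] [MeasurableSpace E] [BorelSpace E]
    (J : Set E → EReal)
    (hJempty : J ∅ = ⊥) (hJuniv : J univ = 0) (hJle : ∀ A : Set E, J A ≤ 0)
    (hJmono : ∀ A B : Set E, MeasurableSet A → MeasurableSet B → A ⊆ B → J A ≤ J B)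
    (I : E → EReal) (hI : ∀ x, 0 ≤ I x) :
    (∀ O : Set E, IsOpen O → -(⨅ x ∈ O, I x) ≤ J O) ↔
      (∀ f : E → EReal, LowerSemicontinuous f → (∀ x, f x ≠ ⊤) →
        (⨆ x : E, f x - I x) ≤ convexIntegral J f) :=
  stmt_9_general J hJempty I
end

section
/- Let E be a topological space and φ : B(E) → [-∞,∞] a maxitive monetary risk measure, with associated concentration J(A) = φ(-∞·1_{A^c}). Then φ(f) = φ_J(f) = sup_{c∈ℝ}(c + J({f > c})) for every Borel function f : E → ℝ ∪ {-∞} that is bounded from above. -/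
/-!
The bound `c + J({f > c}) ≤ φ(f)` is monotonicity applied to `-∞·1_{f ≤ c} + c ≤ f`.
Conversely, cut the range of `f ≤ a + nδ` at `c = a + (n-1)δ`: then
`f ≤ (-∞·1_{f ≤ c} + c + δ) ⊔ (f ∧ c)`, so maxitivity bounds `φ(f)` by `(c + J({f > c}) + δ) ⊔ φ(f ∧ c)`.
Iterating `n` times, down to the constant `a`, gives `φ(f) ≤ (φ_J(f) + δ) ⊔ a`, and `a → -∞`, `δ → 0`.
-/

open Set
open scoped Classical

/-- The function equal to `0` on `A` and `-∞` on `Aᶜ`. -/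
noncomputable def botIndicator {E : Type*} (A : Set E) : E → EReal :=
  fun x => if x ∈ A then (0 : EReal) else ⊥

namespace EReal

lemma le_of_forall_le_add_coe_sup_coe {x y : EReal}
    (h : ∀ δ : ℝ, 0 < δ → ∀ a : ℝ, x ≤ (y + δ) ⊔ a) : x ≤ y := by
  refine le_of_forall_lt_iff_le.mp fun z hyz => ?_
  obtain ⟨s, hys, hsz⟩ := exists_between_coe_real hyz
  have hδ : 0 < z - s := _root_.sub_pos.mpr (mod_cast hsz)
  have hyδ : y + ((z - s : ℝ) : EReal) ≤ z := by
    calc y + ((z - s : ℝ) : EReal) ≤ s + ((z - s : ℝ) : EReal) := add_le_add_left hys.le _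
      _ = z := by rw [← coe_add]; norm_num
  exact (h _ hδ z).trans (sup_le hyδ le_rfl)

end EReal

section botIndicator

variable {E : Type*}

lemma botIndicator_add_coe (A : Set E) (c : ℝ) (x : E) :
    botIndicator A x + (c : EReal) = if x ∈ A then (c : EReal) else ⊥ := by
  by_cases hx : x ∈ A <;> simp [botIndicator, hx]

lemma botIndicator_mono {A B : Set E} (hAB : A ⊆ B) (x : E) :
    botIndicator A x ≤ botIndicator B x := by
  by_cases hx : x ∈ A
  · simp [botIndicator, hx, hAB hx]
  · simp [botIndicator, hx]

variable [MeasurableSpace E]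

lemma measurable_botIndicator {A : Set E} (hA : MeasurableSet A) :
    Measurable (botIndicator A) :=
  Measurable.ite hA measurable_const measurable_const

end botIndicator

section RiskMeasure

variable {E : Type*} [MeasurableSpace E] {φ : (E → EReal) → EReal}

lemma map_const_of_add_const (hN : φ (fun _ => 0) = 0)
    (hT : ∀ (f : E → EReal) (c : ℝ), Measurable f → φ (fun x => f x + (c : EReal)) = φ f + (c : EReal))
    (a : ℝ) : φ (fun _ => (a : EReal)) = a := by
  simpa [hN] using hT (fun _ => 0) a measurable_const

lemma coe_add_map_botIndicator_le
    (hM : ∀ f g : E → EReal, Measurable f → Measurable g → (∀ x, f x ≤ g x) → φ f ≤ φ g)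
    (hT : ∀ (f : E → EReal) (c : ℝ), Measurable f → φ (fun x => f x + (c : EReal)) = φ f + (c : EReal))
    {f : E → EReal} (hf : Measurable f) (c : ℝ) :
    (c : EReal) + φ (botIndicator {x | (c : EReal) < f x}) ≤ φ f := by
  have hA : Measurable (botIndicator {x | (c : EReal) < f x}) :=
    measurable_botIndicator (hf measurableSet_Ioi)
  have hle : ∀ x, botIndicator {x | (c : EReal) < f x} x + (c : EReal) ≤ f x := by
    intro x
    rw [botIndicator_add_coe]
    split_ifs with hx
    exacts [le_of_lt hx, bot_le]
  rw [add_comm, ← hT _ c hA]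
  exact hM _ f (hA.add_const _) hf hle

lemma map_le_sup_map_min
    (hM : ∀ f g : E → EReal, Measurable f → Measurable g → (∀ x, f x ≤ g x) → φ f ≤ φ g)
    (hT : ∀ (f : E → EReal) (c : ℝ), Measurable f → φ (fun x => f x + (c : EReal)) = φ f + (c : EReal))
    (hmax : ∀ f g : E → EReal, Measurable f → Measurable g → φ (fun x => f x ⊔ g x) ≤ φ f ⊔ φ g)
    {g : E → EReal} (hg : Measurable g) {b : ℝ} (hgb : ∀ x, g x ≤ (b : EReal)) (c : ℝ) :
    φ g ≤ (φ (botIndicator {x | (c : EReal) < g x}) + b) ⊔ φ (fun x => g x ⊓ c) := by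
  set A := {x | (c : EReal) < g x}
  have hA : Measurable (botIndicator A) := measurable_botIndicator (hg measurableSet_Ioi)
  have hmin : Measurable fun x => g x ⊓ (c : EReal) := hg.min measurable_const
  have hsplit : ∀ x, g x ≤ (botIndicator A x + b) ⊔ (g x ⊓ c) := by
    intro x
    rw [botIndicator_add_coe]
    by_cases hx : x ∈ A
    · simpa [hx] using Or.inl (hgb x)
    · simpa [hx] using (not_lt.mp hx)
  rw [← hT _ b hA]
  exact (hM _ _ hg ((hA.add_const _).max hmin) hsplit).trans (hmax _ _ (hA.add_const _) hmin)

lemma map_le_add_sup_of_le_add_mul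
    (hN : φ (fun _ => 0) = 0)
    (hM : ∀ f g : E → EReal, Measurable f → Measurable g → (∀ x, f x ≤ g x) → φ f ≤ φ g)
    (hT : ∀ (f : E → EReal) (c : ℝ), Measurable f → φ (fun x => f x + (c : EReal)) = φ f + (c : EReal))
    (hmax : ∀ f g : E → EReal, Measurable f → Measurable g → φ (fun x => f x ⊔ g x) ≤ φ f ⊔ φ g)
    {f : E → EReal} (hf : Measurable f) (a δ : ℝ) (n : ℕ) :
    ∀ g : E → EReal, Measurable g → (∀ x, g x ≤ f x) → (∀ x, g x ≤ ((a + n * δ : ℝ) : EReal)) →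
      φ g ≤ ((⨆ c : ℝ, (c : EReal) + φ (botIndicator {x | (c : EReal) < f x})) + δ) ⊔ a := by
  set S := ⨆ c : ℝ, (c : EReal) + φ (botIndicator {x | (c : EReal) < f x})
  induction n with
  | zero =>
    intro g hg _ hga
    refine le_sup_of_le_right ?_
    rw [← map_const_of_add_const hN hT a]
    exact hM _ _ hg measurable_const (by simpa using hga)
  | succ n ih =>
    intro g hg hgf hgb
    set c : ℝ := a + n * δ
    have hJ : φ (botIndicator {x | (c : EReal) < g x}) + ((a + (n + 1 : ℕ) * δ : ℝ) : EReal) ≤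
        S + δ := by
      have hsub : {x | (c : EReal) < g x} ⊆ {x | (c : EReal) < f x} :=
        fun x hx => lt_of_lt_of_le hx (hgf x)
      have hb : ((a + (n + 1 : ℕ) * δ : ℝ) : EReal) = c + δ := by
        rw [← EReal.coe_add, EReal.coe_eq_coe_iff]; push_cast [c]; ring
      calc φ (botIndicator {x | (c : EReal) < g x}) + ((a + (n + 1 : ℕ) * δ : ℝ) : EReal)
          = (c + φ (botIndicator {x | (c : EReal) < g x})) + δ := by
            rw [hb, ← add_assoc, add_comm (φ _)]
        _ ≤ (c + φ (botIndicator {x | (c : EReal) < f x})) + δ := by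
            gcongr
            exact hM _ _ (measurable_botIndicator (hg measurableSet_Ioi))
              (measurable_botIndicator (hf measurableSet_Ioi)) (botIndicator_mono hsub)
        _ ≤ S + δ := by
            gcongr
            exact le_iSup (fun c : ℝ => (c : EReal) + φ (botIndicator {x | (c : EReal) < f x})) c
    have hmin := ih (fun x => g x ⊓ c) (hg.min measurable_const)
      (fun x => inf_le_left.trans (hgf x)) (fun x => inf_le_right)
    calc φ g ≤ (φ (botIndicator {x | (c : EReal) < g x}) + ((a + (n + 1 : ℕ) * δ : ℝ) : EReal)) ⊔
          φ (fun x => g x ⊓ c) := map_le_sup_map_min hM hT hmax hg hgb c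
      _ ≤ (S + δ) ⊔ ((S + δ) ⊔ a) := sup_le_sup hJ hmin
      _ = (S + δ) ⊔ a := by rw [← sup_assoc, sup_idem]

end RiskMeasure

theorem stmt_15_general {E : Type*} [MeasurableSpace E]
    (φ : (E → EReal) → EReal)
    (hN : φ (fun _ => 0) = 0)
    (hM : ∀ f g : E → EReal, Measurable f → Measurable g → (∀ x, f x ≤ g x) → φ f ≤ φ g)
    (hT : ∀ (f : E → EReal) (c : ℝ), Measurable f → φ (fun x => f x + (c : EReal)) = φ f + (c : EReal))
    (hmax : ∀ f g : E → EReal, Measurable f → Measurable g → φ (fun x => f x ⊔ g x) ≤ φ f ⊔ φ g)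
    (f : E → EReal) (hf : Measurable f) (hbdd : ∃ c : ℝ, ∀ x, f x ≤ (c : EReal)) :
    φ f = ⨆ c : ℝ, ((c : EReal) + φ (botIndicator {x | (c : EReal) < f x})) := by
  refine le_antisymm ?_ (iSup_le (coe_add_map_botIndicator_le hM hT hf))
  obtain ⟨b, hb⟩ := hbdd
  refine EReal.le_of_forall_le_add_coe_sup_coe fun δ hδ a => ?_
  obtain ⟨n, hn⟩ := exists_nat_ge ((b - a) / δ)
  have hba : b ≤ a + n * δ := by linarith [(div_le_iff₀ hδ).mp hn]
  exact map_le_add_sup_of_le_add_mul hN hM hT hmax hf a δ n f hf (fun _ => le_rfl)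
    (fun x => (hb x).trans (mod_cast hba))

/-- Representation of a maxitive monetary risk measure as a convex integral on functions
bounded from above: `φ(f) = sup_c (c + J({f > c}))` where `J(A) = φ(-∞·1_{A^c})`. -/
theorem stmt_15 {E : Type*} [TopologicalSpace E] [MeasurableSpace E] [BorelSpace E]
    (φ : (E → EReal) → EReal)
    (hN : φ (fun _ => 0) = 0)
    (hM : ∀ f g : E → EReal, Measurable f → Measurable g → (∀ x, f x ≤ g x) → φ f ≤ φ g)
    (hT : ∀ (f : E → EReal) (c : ℝ), Measurable f → φ (fun x => f x + (c : EReal)) = φ f + (c : EReal))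
    (hmax : ∀ f g : E → EReal, Measurable f → Measurable g → φ (fun x => f x ⊔ g x) ≤ φ f ⊔ φ g)
    (f : E → EReal) (hf : Measurable f) (hbdd : ∃ c : ℝ, ∀ x, f x ≤ (c : EReal)) :
    φ f = ⨆ c : ℝ, ((c : EReal) + φ (botIndicator {x | (c : EReal) < f x})) :=
  stmt_15_general φ hN hM hT hmax f hf hbdd
end
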